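/- Let κ be an uncountable regular cardinal and let P be a partial order such that the collection of regular suborders of P of size less than κ is stationary in P_κ(P). Then P is κ-Knaster: every A ⊆ P with |A| = κ has a subset of size κ of pairwise compatible elements. -/
import Mathlib


open Cardinal

universe u
variable {P : Type u} [PartialOrder P]

/-- Two conditions are compatible if they have a common lower bound. -/
def Compat (p q : P) : Prop := ∃ r, r ≤ p ∧ r ≤ q

/-- Compatibility within a suborder `Q`: a common lower bound lying in `Q`. -/
def CompatIn (Q : Set P) (p q : P) : Prop := ∃ r ∈ Q, r ≤ p ∧ r ≤ q

/-- `A` is an antichain of the suborder `Q`: a set of pairwise `Q`-incompatible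
elements of `Q`.  (Taking `Q = Set.univ` gives antichains of `P`.) -/
def IsAntichainIn (Q A : Set P) : Prop :=
  A ⊆ Q ∧ ∀ p ∈ A, ∀ q ∈ A, p ≠ q → ¬ CompatIn Q p q

/-- `A` is a maximal antichain of the suborder `Q`: an antichain of `Q` such that every
element of `Q` is `Q`-compatible with some element of `A`. -/
def IsMaxAntichainIn (Q A : Set P) : Prop :=
  IsAntichainIn Q A ∧ ∀ q ∈ Q, ∃ a ∈ A, CompatIn Q q a

/-- `Q` is a regular suborder of `P`: incompatibility in `Q` implies incompatibility
in `P`, and maximal antichains of `Q` are maximal antichains of `P`. -/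
def IsRegularSuborder (Q : Set P) : Prop :=
  (∀ p ∈ Q, ∀ q ∈ Q, ¬ CompatIn Q p q → ¬ Compat p q) ∧
    ∀ A : Set P, IsMaxAntichainIn Q A → IsMaxAntichainIn Set.univ A

/-- `P` satisfies the `κ`-chain condition: every antichain of `P` has size `< κ`. -/
def CCC (P : Type*) [PartialOrder P] (κ : Cardinal) : Prop :=
  ∀ A : Set P, IsAntichainIn Set.univ A → #A < κ

/-- `P` is `κ`-Knaster: every subset of size `κ` has a subset of size `κ` consisting of
pairwise compatible elements. -/
def IsKnaster (P : Type*) [PartialOrder P] (κ : Cardinal) : Prop :=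
  ∀ A : Set P, #A = κ → ∃ B ⊆ A, #B = κ ∧ ∀ p ∈ B, ∀ q ∈ B, Compat p q

/-- `C ⊆ P_κ(X)` is `⊆`-continuous: closed under unions of `⊆`-increasing chains of
size `< κ`. -/
def IsContinuousIn (κ : Cardinal.{u}) (C : Set (Set P)) : Prop :=
  ∀ D : Set (Set P), D ⊆ C → D.Nonempty → IsChain (· ⊆ ·) D → #D < κ → ⋃₀ D ∈ C

/-- `C ⊆ P_κ(X)` is cofinal: every set of size `< κ` is contained in a member of `C`. -/
def IsCofinalIn (κ : Cardinal.{u}) (C : Set (Set P)) : Prop :=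
  ∀ a : Set P, #a < κ → ∃ c ∈ C, a ⊆ c

/-! ### Auxiliary material for the proof of Cox's lemma -/

/-- Every regular suborder contains a *reduction* of every condition `p`: an element
`q ∈ Q` all of whose extensions within `Q` are compatible (in `P`) with `p`. -/
private lemma exists_reduction {Q : Set P} (hQ : IsRegularSuborder Q) (p : P) :
    ∃ q ∈ Q, ∀ r ∈ Q, r ≤ q → Compat r p := by
  classical
  by_contra hno
  push_neg at hno
  -- `hno : ∀ q ∈ Q, ∃ r ∈ Q, r ≤ q ∧ ¬ Compat r p`
  set D : Set P := {r | r ∈ Q ∧ ¬ Compat r p} with hDdef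
  -- Zorn: a maximal antichain of `Q` contained in `D`.
  obtain ⟨W, hWmax⟩ := zorn_subset {W : Set P | W ⊆ D ∧ IsAntichainIn Q W} (by
    intro c hc hchain
    refine ⟨⋃₀ c, ⟨Set.sUnion_subset fun s hs => (hc hs).1, ?_, ?_⟩,
      fun s hs => Set.subset_sUnion_of_mem hs⟩
    · exact Set.sUnion_subset fun s hs => (hc hs).2.1
    · rintro p₁ ⟨s₁, hs₁, hp₁⟩ p₂ ⟨s₂, hs₂, hp₂⟩ hne
      rcases eq_or_ne s₁ s₂ with rfl | hsne
      · exact (hc hs₁).2.2 p₁ hp₁ p₂ hp₂ hne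
      · rcases hchain hs₁ hs₂ hsne with hsub | hsub
        · exact (hc hs₂).2.2 p₁ (hsub hp₁) p₂ hp₂ hne
        · exact (hc hs₁).2.2 p₁ hp₁ p₂ (hsub hp₂) hne)
  have hWD : W ⊆ D := hWmax.1.1
  have hWQ : IsAntichainIn Q W := hWmax.1.2
  -- `W` is a maximal antichain of `Q`.
  have hWmaxAC : IsMaxAntichainIn Q W := by
    refine ⟨hWQ, ?_⟩
    intro q hq
    obtain ⟨r, hrQ, hrq, hrnc⟩ := hno q hq
    by_cases hex : ∃ w ∈ W, CompatIn Q r w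
    · obtain ⟨w, hwW, s, hsQ, hsr, hsw⟩ := hex
      exact ⟨w, hwW, s, hsQ, hsr.trans hrq, hsw⟩
    · exfalso
      push_neg at hex
      have hrW : r ∉ W := fun h => hex r h ⟨r, hrQ, le_rfl, le_rfl⟩
      have hins : insert r W ∈ {W : Set P | W ⊆ D ∧ IsAntichainIn Q W} := by
        refine ⟨Set.insert_subset ⟨hrQ, hrnc⟩ hWD, Set.insert_subset hrQ hWQ.1, ?_⟩
        rintro p₁ (rfl | hp₁) p₂ (rfl | hp₂) hne
        · exact absurd rfl hne
        · exact hex p₂ hp₂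
        · intro ⟨s, hsQ, hs₁, hs₂⟩; exact hex p₁ hp₁ ⟨s, hsQ, hs₂, hs₁⟩
        · exact hWQ.2 p₁ hp₁ p₂ hp₂ hne
      exact hrW (hWmax.2 hins (Set.subset_insert r W) (Set.mem_insert r W))
  -- By regularity, `W` is a maximal antichain of `P`, so `p` is compatible with some
  -- member of `W ⊆ D`, a contradiction.
  obtain ⟨w, hwW, s, -, hsp, hsw⟩ := (hQ.2 W hWmaxAC).2 p (Set.mem_univ p)
  exact (hWD hwW).2 ⟨s, hsw, hsp⟩

private lemma card_sUnion_lt_aux {κ : Cardinal.{u}} (hreg : κ.IsRegular) {D : Set (Set P)}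
    (hD : #D < κ) (h : ∀ a ∈ D, #a < κ) : #(⋃₀ D) < κ :=
  lt_of_le_of_lt (mk_sUnion_le D)
    (mul_lt_of_lt hreg.aleph0_le hD (iSup_lt_of_isRegular hreg hD fun s => h s s.2))

private lemma card_biUnion_lt_aux {α β : Type u} {κ : Cardinal.{u}} (hreg : κ.IsRegular)
    {s : Set α} (hs : #s < κ) {f : α → Set β} (hf : ∀ a ∈ s, #(f a) < κ) :
    #(⋃ a ∈ s, f a) < κ := by
  rw [Set.biUnion_eq_iUnion]
  refine lt_of_le_of_lt (mk_iUnion_le _) ?_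
  exact mul_lt_of_lt hreg.aleph0_le hs (iSup_lt_of_isRegular hreg hs fun i => hf i i.2)

private lemma card_iUnion_nat_lt_aux {κ : Cardinal.{u}} (hreg : κ.IsRegular) (hunc : ℵ₀ < κ)
    (d : ℕ → Set P) (h : ∀ n, #(d n) < κ) : #(⋃ n, d n) < κ := by
  rw [← Set.sUnion_range]
  refine card_sUnion_lt_aux hreg ?_ ?_
  · exact lt_of_le_of_lt (Set.Countable.le_aleph0 (Set.countable_range d)) hunc
  · rintro a ⟨n, rfl⟩; exact h n

/-- A "club" in `P_κ(P)`: a continuous cofinal family of small sets. -/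
private def IsClubIn (κ : Cardinal.{u}) (C : Set (Set P)) : Prop :=
  (∀ a ∈ C, #a < κ) ∧ IsContinuousIn κ C ∧ IsCofinalIn κ C

private lemma isClubIn_principal {κ : Cardinal.{u}} (hreg : κ.IsRegular) {x : Set P}
    (hx : #x < κ) : IsClubIn κ {M : Set P | #M < κ ∧ x ⊆ M} := by
  refine ⟨fun a ha => ha.1, ?_, ?_⟩
  · intro D hD hne hchain hsize
    refine ⟨card_sUnion_lt_aux hreg hsize fun a ha => (hD ha).1, ?_⟩
    obtain ⟨N, hN⟩ := hne
    exact (hD hN).2.trans (Set.subset_sUnion_of_mem hN)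
  · intro a ha
    exact ⟨a ∪ x,
      ⟨lt_of_le_of_lt (mk_union_le a x) (add_lt_of_lt hreg.aleph0_le ha hx),
        Set.subset_union_right⟩, Set.subset_union_left⟩

/-- Diagonal intersection of a `P`-indexed family of clubs is a club. -/
private lemma isClubIn_diag {κ : Cardinal.{u}} (hreg : κ.IsRegular) (hunc : ℵ₀ < κ)
    (Cq : P → Set (Set P)) (h : ∀ q, IsClubIn κ (Cq q)) :
    IsClubIn κ {M : Set P | #M < κ ∧ ∀ q ∈ M, M ∈ Cq q} := by
  classical
  refine ⟨fun a ha => ha.1, ?_, ?_⟩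
  · -- continuity
    intro D hD hne hchain hsize
    have hsmall : #(⋃₀ D) < κ := card_sUnion_lt_aux hreg hsize fun a ha => (hD ha).1
    refine ⟨hsmall, ?_⟩
    intro q hq
    obtain ⟨N0, hN0D, hqN0⟩ := hq
    have key : ⋃₀ {N ∈ D | q ∈ N} = ⋃₀ D := by
      apply subset_antisymm (Set.sUnion_subset_sUnion fun N hN => hN.1)
      rintro x ⟨N1, hN1, hxN1⟩
      rcases eq_or_ne N1 N0 with rfl | hne'
      · exact ⟨N1, ⟨hN1, hqN0⟩, hxN1⟩
      · rcases hchain hN1 hN0D hne' with hsub | hsub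
        · exact ⟨N0, ⟨hN0D, hqN0⟩, hsub hxN1⟩
        · exact ⟨N1, ⟨hN1, hsub hqN0⟩, hxN1⟩
    rw [← key]
    exact (h q).2.1 _ (fun N hN => (hD hN.1).2 q hN.2) ⟨N0, hN0D, hqN0⟩
      (hchain.mono fun N hN => hN.1)
      (lt_of_le_of_lt (mk_le_mk_of_subset fun N hN => hN.1) hsize)
  · -- cofinality
    intro a ha
    have hcof : ∀ q : P, ∀ y : Set P, #y < κ → ∃ c, c ∈ Cq q ∧ y ⊆ c := by
      intro q y hy
      obtain ⟨c, hc1, hc2⟩ := (h q).2.2 y hy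
      exact ⟨c, hc1, hc2⟩
    choose! g hg1 hg2 using hcof
    let d : ℕ → Set P := fun n => Nat.rec a (fun _ dn => dn ∪ ⋃ q ∈ dn, g q dn) n
    have hdsucc : ∀ n, d (n + 1) = d n ∪ ⋃ q ∈ d n, g q (d n) := fun n => rfl
    have hdsmall : ∀ n, #(↥(d n)) < κ := by
      intro n
      induction n with
      | zero => exact ha
      | succ n ih =>
        rw [hdsucc]
        refine lt_of_le_of_lt (mk_union_le _ _) (add_lt_of_lt hreg.aleph0_le ih ?_)
        exact card_biUnion_lt_aux hreg ih fun q hq => (h q).1 _ (hg1 q (d n) ih)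
    have hdmono : Monotone d := monotone_nat_of_le_succ fun n => by
      rw [hdsucc]; exact Set.subset_union_left
    have hdg : ∀ q n, q ∈ d n → g q (d n) ⊆ d (n + 1) := by
      intro q n hq
      rw [hdsucc]
      exact Set.subset_union_of_subset_right (Set.subset_biUnion_of_mem (u := fun q => g q (d n)) hq) (d n)
    have hMsmall : #(⋃ n, d n) < κ := card_iUnion_nat_lt_aux hreg hunc d hdsmall
    refine ⟨⋃ n, d n, ⟨hMsmall, ?_⟩, (Set.subset_iUnion d 0 : a ⊆ _)⟩
    intro q hq
    obtain ⟨n0, hqn0⟩ := Set.mem_iUnion.1 hq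
    set e : ℕ → Set P := fun k => g q (d (n0 + k)) with he
    have hemono : Monotone e := by
      apply monotone_nat_of_le_succ
      intro k
      show g q (d (n0 + k)) ⊆ g q (d (n0 + (k + 1)))
      rw [Nat.add_succ]
      exact (hdg q _ (hdmono (Nat.le_add_right n0 k) hqn0)).trans (hg2 q (d (n0 + k + 1)) (hdsmall (n0 + k + 1)))
    have hEeq : ⋃₀ Set.range e = ⋃ n, d n := by
      rw [Set.sUnion_range]
      apply subset_antisymm
      · refine Set.iUnion_subset fun k => ?_
        exact (hdg q _ (hdmono (Nat.le_add_right n0 k) hqn0)).trans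
          (Set.subset_iUnion d (n0 + k + 1))
      · refine Set.iUnion_subset fun n => ?_
        exact ((hdmono (Nat.le_add_left n n0)).trans (hg2 q _ (hdsmall _))).trans
          (Set.subset_iUnion e n)
    rw [← hEeq]
    refine (h q).2.1 _ ?_ ⟨e 0, Set.mem_range_self 0⟩ ?_ ?_
    · rintro c ⟨k, rfl⟩
      exact hg1 q _ (hdsmall _)
    · rintro c1 ⟨k1, rfl⟩ c2 ⟨k2, rfl⟩ _
      rcases le_total k1 k2 with hk | hk
      · exact Or.inl (hemono hk)
      · exact Or.inr (hemono hk)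
    · exact lt_of_le_of_lt (Set.Countable.le_aleph0 (Set.countable_range e)) hunc

/-- Cox's lemma: if the collection of regular suborders of `P` of size `< κ` is
stationary in `P_κ(P)` (it meets every `⊆`-continuous cofinal subcollection of
`P_κ(P)`), then `P` is `κ`-Knaster. -/
theorem knaster_of_stationarily_layered (κ : Cardinal.{u})
    (hreg : κ.IsRegular) (hunc : ℵ₀ < κ)
    (hstat : ∀ C : Set (Set P), C ⊆ {a : Set P | #a < κ} →
      IsContinuousIn κ C → IsCofinalIn κ C →
      ∃ Q ∈ C, #Q < κ ∧ IsRegularSuborder Q) :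
    IsKnaster P κ := by
  classical
  intro A hA
  have hPne : Nonempty P := by
    have hκ0 : (0 : Cardinal) < κ := aleph0_pos.trans hunc
    rw [← hA] at hκ0
    obtain ⟨x, -⟩ := Cardinal.mk_ne_zero_iff.1 hκ0.ne'
    exact ⟨x⟩
  -- For each small `Q`, pick an element of `A` outside `Q`.
  have hpickx : ∀ Q : Set P, #Q < κ → ∃ x, x ∈ A ∧ x ∉ Q := by
    intro Q hQ
    by_contra hcon
    push_neg at hcon
    have hsub : A ⊆ Q := fun x hx => hcon x hx
    have : (κ : Cardinal) ≤ #Q := hA ▸ mk_le_mk_of_subset hsub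
    exact absurd (this.trans_lt hQ) (lt_irrefl κ)
  choose! xf hxA hxnot using hpickx
  -- For each regular `Q`, pick a reduction of `xf Q`.
  have hredf : ∀ Q : Set P, IsRegularSuborder Q →
      ∃ q, q ∈ Q ∧ ∀ r ∈ Q, r ≤ q → Compat r (xf Q) := by
    intro Q hQ
    obtain ⟨q, hq1, hq2⟩ := exists_reduction hQ (xf Q)
    exact ⟨q, hq1, hq2⟩
  choose! qf hqmem hqred using hredf
  -- There is a single `q0` which is the chosen reduction on "stationarily many"
  -- regular suborders.
  have hgood : ∃ q0 : P, ∀ C : Set (Set P), IsClubIn κ C →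
      ∃ Q : Set P, (#Q < κ ∧ IsRegularSuborder Q) ∧ Q ∈ C ∧ qf Q = q0 := by
    by_contra hbad
    push_neg at hbad
    choose Cq hCq1 hCq2 using hbad
    have hdiag := isClubIn_diag hreg hunc Cq hCq1
    obtain ⟨Q, hQmem, hQsmall, hQreg⟩ := hstat {M | #M < κ ∧ ∀ q ∈ M, M ∈ Cq q}
      (fun a ha => ha.1) hdiag.2.1 hdiag.2.2
    exact hCq2 (qf Q) Q ⟨hQsmall, hQreg⟩ (hQmem.2 (qf Q) (hqmem Q hQreg)) rfl
  obtain ⟨q0, hq0⟩ := hgood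
  -- Step function for the recursion: given a small set `y`, a regular suborder
  -- containing `y` whose chosen reduction is `q0`.
  have hstep : ∀ y : Set P, #y < κ →
      ∃ Q : Set P, (#Q < κ ∧ IsRegularSuborder Q) ∧ (#Q < κ ∧ y ⊆ Q) ∧ qf Q = q0 := by
    intro y hy
    obtain ⟨Q, h1, h2, h3⟩ := hq0 _ (isClubIn_principal hreg hy)
    exact ⟨Q, h1, h2, h3⟩
  choose! Qpick hQ1 hQ2 hQ3 using hstep
  -- Transfinite recursion of length `κ`.
  have wf : WellFounded ((· < ·) : κ.ord.ToType → κ.ord.ToType → Prop) :=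
    IsWellFounded.wf
  set F : κ.ord.ToType → Set P := wf.fix (fun ξ IH =>
    Qpick (Set.range fun η : {η // η < ξ} => xf (IH η.1 η.2))) with hFdef
  have hFeq : ∀ ξ, F ξ = Qpick (Set.range fun η : {η // η < ξ} => xf (F η.1)) := by
    intro ξ
    rw [hFdef]
    exact wf.fix_eq _ ξ
  have hprev : ∀ ξ : κ.ord.ToType,
      #(Set.range fun η : {η // η < ξ} => xf (F η.1)) < κ := by
    intro ξ
    refine lt_of_le_of_lt mk_range_le ?_
    exact Cardinal.mk_Iio_ord_toType ξ
  have hFreg : ∀ ξ, #(↥(F ξ)) < κ ∧ IsRegularSuborder (F ξ) := fun ξ => by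
    rw [hFeq ξ]; exact hQ1 _ (hprev ξ)
  have hFq : ∀ ξ, qf (F ξ) = q0 := fun ξ => by
    rw [hFeq ξ]; exact hQ3 _ (hprev ξ)
  have hFsub : ∀ ξ η, η < ξ → xf (F η) ∈ F ξ := fun ξ η hη => by
    rw [hFeq ξ]
    exact (hQ2 _ (hprev ξ)).2 ⟨⟨η, hη⟩, rfl⟩
  set b : κ.ord.ToType → P := fun ξ => xf (F ξ) with hbdef
  have hbA : ∀ ξ, b ξ ∈ A := fun ξ => hxA _ (hFreg ξ).1
  have hbnot : ∀ ξ, b ξ ∉ F ξ := fun ξ => hxnot _ (hFreg ξ).1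
  have hinj : Function.Injective b := by
    intro η ξ hb
    by_contra hne
    rcases lt_or_gt_of_ne hne with hlt | hlt
    · have : b η ∈ F ξ := hFsub ξ η hlt
      rw [hb] at this
      exact hbnot ξ this
    · have : b ξ ∈ F η := hFsub η ξ hlt
      rw [← hb] at this
      exact hbnot η this
  have hcompat : ∀ η ξ, η < ξ → Compat (b η) (b ξ) := by
    intro η ξ hlt
    have hbmem : b η ∈ F ξ := hFsub ξ η hlt
    have hq0ξ : q0 ∈ F ξ := by
      have h1 := hqmem (F ξ) (hFreg ξ).2
      rwa [hFq ξ] at h1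
    -- `q0` is compatible with `b η` since it is a reduction of `b η` w.r.t. `F η`.
    have h1 : Compat q0 (b η) := by
      have h2 := hqred (F η) (hFreg η).2 (qf (F η)) (hqmem (F η) (hFreg η).2) le_rfl
      rwa [hFq η] at h2
    -- By regularity of `F ξ`, they are compatible inside `F ξ`.
    have h2 : CompatIn (F ξ) q0 (b η) := by
      by_contra hno
      exact (hFreg ξ).2.1 q0 hq0ξ (b η) hbmem hno h1
    obtain ⟨r, hrF, hrq0, hrb⟩ := h2
    -- `r ≤ q0 = qf (F ξ)` lies in `F ξ`, so it is compatible with `b ξ`.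
    have h3 : Compat r (b ξ) := hqred (F ξ) (hFreg ξ).2 r hrF (by rw [hFq ξ]; exact hrq0)
    obtain ⟨s, hsr, hsb⟩ := h3
    exact ⟨s, hsr.trans hrb, hsb⟩
  refine ⟨Set.range b, ?_, ?_, ?_⟩
  · rintro x ⟨ξ, rfl⟩; exact hbA ξ
  · rw [mk_range_eq b hinj, mk_ord_toType]
  · rintro p ⟨η, rfl⟩ q ⟨ξ, rfl⟩
    rcases lt_trichotomy η ξ with hl | hl | hl
    · exact hcompat η ξ hl
    · exact hl ▸ ⟨b η, le_rfl, le_rfl⟩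
    · obtain ⟨s, h1, h2⟩ := hcompat ξ η hl
      exact ⟨s, h2, h1⟩
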